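/- arXiv:1608.03116 — 7 statements merged into one kernel-verified Lean document; each statement's English description precedes it below -/
import Mathlib

section
/- A semigroup S is semilattice indecomposable if and only if S has no proper completely prime ideal. -/
/-!
Order a semilattice `T` by `x ≤ y ↔ x * y = x`. For a homomorphism `f : S →ₙ* T` and `t : S`,
the set `{u | f t ≤ f u}` is closed under products and its complement absorbs products, so the
complement is a completely prime ideal; it is proper since it misses `t`, and nonempty as soon
as `f` is not constant (for `f x ≠ f y`, one of `f x`, `f y` is not below the other).
Conversely, a proper completely prime ideal `I` makes `x ↦ decide (x ∉ I)` a nonconstant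
homomorphism onto the two-element semilattice `(Bool, &&)`.
-/

universe u

/-- A semigroup is semilattice indecomposable if every semigroup homomorphism from it to a
semilattice (a commutative idempotent semigroup) is constant. -/
def SemilatticeIndecomposable (S : Type u) [Semigroup S] : Prop :=
  ∀ (T : Type u) [Semigroup T],
    (∀ a b : T, a * b = b * a) → (∀ a : T, a * a = a) →
      ∀ f : S →ₙ* T, ∀ x y : S, f x = f y

/-- An ideal of a semigroup: a nonempty subset closed under left and right multiplication
by arbitrary elements. -/
def IsIdeal {S : Type u} [Mul S] (I : Set S) : Prop :=
  I.Nonempty ∧ ∀ a ∈ I, ∀ s : S, s * a ∈ I ∧ a * s ∈ I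

/-- An ideal is completely prime if its complement is closed under multiplication. -/
def IsCompletelyPrime {S : Type u} [Mul S] (I : Set S) : Prop :=
  ∀ a b : S, a ∉ I → b ∉ I → a * b ∉ I

section Semilattice

variable {T : Type*} [Semigroup T]

lemma mul_eq_right_of_mul_mul_eq_right (hc : ∀ a b : T, a * b = b * a)
    (hi : ∀ a : T, a * a = a) {p q r : T} (h : p * q * r = r) : q * r = r :=
  calc q * r = q * (p * q * r) := by rw [h]
    _ = p * (q * q) * r := by rw [← mul_assoc, ← mul_assoc, hc q p, mul_assoc p q q]
    _ = r := by rw [hi, h]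

lemma mul_ne_right_or_mul_ne_right_of_ne (hc : ∀ a b : T, a * b = b * a) {a b : T}
    (hab : a ≠ b) : b * a ≠ a ∨ a * b ≠ b := by
  by_contra! h
  exact hab (by rw [← h.1, hc, h.2])

end Semilattice

section FilterComplement

variable {S T : Type u} [Semigroup S] [Semigroup T]

lemma isCompletelyPrime_setOf_map_mul_ne (f : S →ₙ* T) (e : T) :
    IsCompletelyPrime {u | f u * e ≠ e} := by
  intro a b ha hb
  simp only [Set.mem_ofPred_eq, not_not] at ha hb ⊢
  rw [map_mul, mul_assoc, hb, ha]

lemma isIdeal_setOf_map_mul_ne (hc : ∀ a b : T, a * b = b * a) (hi : ∀ a : T, a * a = a)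
    (f : S →ₙ* T) {e : T} (hne : ∃ s, f s * e ≠ e) : IsIdeal {u | f u * e ≠ e} := by
  refine ⟨hne, fun a ha s => ⟨fun h => ha ?_, fun h => ha ?_⟩⟩
  · rw [map_mul] at h
    exact mul_eq_right_of_mul_mul_eq_right hc hi h
  · rw [map_mul, hc (f a)] at h
    exact mul_eq_right_of_mul_mul_eq_right hc hi h

lemma exists_completelyPrime_of_map_mul_ne (hc : ∀ a b : T, a * b = b * a)
    (hi : ∀ a : T, a * a = a) (f : S →ₙ* T) {s t : S} (h : f s * f t ≠ f t) :
    ∃ I : Set S, IsIdeal I ∧ I ≠ Set.univ ∧ IsCompletelyPrime I :=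
  ⟨{u | f u * f t ≠ f t}, isIdeal_setOf_map_mul_ne hc hi f ⟨s, h⟩,
    (Set.ne_univ_iff_exists_notMem _).2 ⟨t, fun ht => ht (hi _)⟩,
    isCompletelyPrime_setOf_map_mul_ne f _⟩

end FilterComplement

section CompletelyPrime

variable {S : Type u} [Semigroup S] {I : Set S}

lemma mul_notMem_iff (hI : IsIdeal I) (hP : IsCompletelyPrime I) {x y : S} :
    x * y ∉ I ↔ x ∉ I ∧ y ∉ I :=
  ⟨fun h => ⟨fun hx => h (hI.2 x hx y).2, fun hy => h (hI.2 y hy x).1⟩,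
    fun h => hP x y h.1 h.2⟩

open Classical in
noncomputable def complIndicatorHom (hI : IsIdeal I) (hP : IsCompletelyPrime I) :
    S →ₙ* ULift.{u} Bool where
  toFun x := ULift.up (decide (x ∉ I))
  map_mul' x y := by
    ext1
    simp only [ULift.mul_down, Bool.mul_eq_and, mul_notMem_iff hI hP, Bool.decide_and]

end CompletelyPrime

/-- A semigroup is semilattice indecomposable iff it has no proper completely prime ideal. -/
theorem stmt_0 {S : Type u} [Semigroup S] :
    SemilatticeIndecomposable S ↔
      ¬ ∃ I : Set S, IsIdeal I ∧ I ≠ Set.univ ∧ IsCompletelyPrime I := by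
  constructor
  · rintro hind ⟨I, hI, hproper, hP⟩
    obtain ⟨a, ha⟩ := hI.1
    obtain ⟨b, hb⟩ := (Set.ne_univ_iff_exists_notMem I).1 hproper
    have hab := hind (ULift.{u} Bool) (fun p q => ULift.ext _ _ (Bool.and_comm _ _))
      (fun p => ULift.ext _ _ (Bool.and_self _)) (complIndicatorHom hI hP) a b
    simp [complIndicatorHom, ha, hb] at hab
  · intro hno T _ hc hi f x y
    by_contra hxy
    rcases mul_ne_right_or_mul_ne_right_of_ne hc hxy with h | h <;>
      exact hno (exists_completelyPrime_of_map_mul_ne hc hi f h)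
end

section
/- A semigroup S is semilattice indecomposable if and only if for all a, b ∈ S there exists a finite sequence a = a₀, a₁, …, aₙ = b of elements of S such that for each i = 1, …, n, the element a_{i-1} divides some positive power of a_i (i.e., some power of a_i lies in the two-sided principal ideal generated by a_{i-1}, meaning a_i^k ∈ S¹a_{i-1}S¹ for some k ≥ 1). -/
universe u

/-- `spow a n` is the power `a^(n+1)` in a semigroup (so every `spow a n` is a positive power). -/
def spow {S : Type u} [Semigroup S] (a : S) : ℕ → S
  | 0 => a
  | n + 1 => spow a n * a

/-- `DividesPower a b` means `a` divides some positive power of `b`, i.e. some positive power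
of `b` lies in `S¹aS¹ = {a} ∪ aS ∪ Sa ∪ SaS`. -/
def DividesPower {S : Type u} [Semigroup S] (a b : S) : Prop :=
  ∃ k : ℕ, spow b k = a ∨ (∃ s : S, spow b k = a * s) ∨ (∃ s : S, spow b k = s * a) ∨
    (∃ s t : S, spow b k = s * a * t)

/-!
Write `a ⇝ b` for the reflexive-transitive closure of `DividesPower`. A homomorphism `f` into a
semilattice satisfies `f b ≤ f a` whenever `a ⇝ b`, so if all elements are connected both ways,
`f` is constant. Conversely, `a ⇝ x*y` for `a ∈ {x, y}`, and the key fact is that `x ⇝ z` and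
`y ⇝ z` imply `x*y ⇝ z`: then `a ↦ {z | a ⇝ z}` is a homomorphism into the semilattice of subsets
of `S` under intersection, and it separates `a` from `b` unless `a ⇝ b`.
The key fact reduces to `a ⇝ b → a*c ⇝ b*c`, which is proved one step at a time after
normalising `b^k ∈ S¹aS¹` to `b^k ∈ SaS`.
-/

theorem Relation.reflTransGen_iff_exists_chain {α : Type*} {r : α → α → Prop} {a b : α} :
    Relation.ReflTransGen r a b ↔
      ∃ n : ℕ, ∃ c : ℕ → α, c 0 = a ∧ c n = b ∧ ∀ i < n, r (c i) (c (i + 1)) := by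
  constructor
  · intro h
    induction h with
    | refl => exact ⟨0, fun _ => a, rfl, rfl, by simp⟩
    | @tail _ b _ hstep ih =>
      obtain ⟨n, c, hc0, hcn, hc⟩ := ih
      refine ⟨n + 1, fun i => if i ≤ n then c i else b, by simpa using hc0, by simp, ?_⟩
      intro i hi
      rcases Nat.lt_succ_iff_lt_or_eq.mp hi with hi | rfl
      · simpa [hi.le, Nat.succ_le_of_lt hi] using hc i hi
      · simpa [hcn] using hstep
  · rintro ⟨n, c, rfl, rfl, hc⟩
    induction n with
    | zero => exact .refl
    | succ n ih => exact (ih fun i hi => hc i (by omega)).tail (hc n n.lt_succ_self)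

section Semigroup

variable {S : Type u} [Semigroup S]

local notation:50 a " ⇝ " b => Relation.ReflTransGen DividesPower a b

theorem spow_add (a : S) (m n : ℕ) : spow a (m + n + 1) = spow a m * spow a n := by
  induction n with
  | zero => rfl
  | succ n ih => rw [← Nat.add_assoc, spow, ih, spow, mul_assoc]

theorem DividesPower.of_spow_eq {a b s t : S} (k : ℕ) (h : spow b k = s * a * t) :
    DividesPower a b :=
  ⟨k, .inr (.inr (.inr ⟨s, t, h⟩))⟩

/-- Cubing a power of `b` that lies in `S¹aS¹` gives one that lies in `SaS`. -/
theorem dividesPower_iff_exists_spow_eq {a b : S} :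
    DividesPower a b ↔ ∃ k : ℕ, ∃ s t : S, spow b k = s * a * t := by
  refine ⟨fun ⟨k, h⟩ => ⟨k + k + 1 + k + 1, ?_⟩, fun ⟨k, s, t, h⟩ => .of_spow_eq k h⟩
  simp only [spow_add]
  rcases h with h | ⟨s, h⟩ | ⟨s, h⟩ | ⟨s, t, h⟩ <;> rw [h]
  · exact ⟨a, a, rfl⟩
  · exact ⟨a * s, s * a * s, by simp only [mul_assoc]⟩
  · exact ⟨s * a * s, s * a, by simp only [mul_assoc]⟩
  · exact ⟨s * a * t * s, t * s * a * t, by simp only [mul_assoc]⟩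

theorem dividesPower_mul_right (a b : S) : DividesPower a (a * b) :=
  .of_spow_eq 1 (s := a * b) (t := b) (by simp only [spow, mul_assoc])

theorem dividesPower_mul_left (a b : S) : DividesPower b (a * b) :=
  .of_spow_eq 1 (s := a) (t := a * b) (by simp only [spow, mul_assoc])

theorem dividesPower_mul_comm (a b : S) : DividesPower (a * b) (b * a) :=
  .of_spow_eq 1 (s := b) (t := a) (by simp only [spow, mul_assoc])

theorem dividesPower_mul_self (a : S) : DividesPower (a * a) a :=
  ⟨1, .inl rfl⟩

theorem reflTransGen_mul_mul_spow (b c : S) (m : ℕ) : b * c * spow b m ⇝ b * c := by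
  induction m with
  | zero => exact .single (.of_spow_eq 2 (s := b * c) (t := c) (by simp only [spow, mul_assoc]))
  | succ m ih =>
    exact .head (.of_spow_eq 2 (s := b * c * spow b m) (t := c * spow b m)
      (by simp only [spow, mul_assoc])) ih

theorem reflTransGen_spow_mul (b c : S) (k : ℕ) : spow b k * c ⇝ b * c := by
  cases k with
  | zero => exact .refl
  | succ k =>
    exact .head (.of_spow_eq 1 (s := b * c) (t := spow b k)
      (by simp only [spow, mul_assoc])) (reflTransGen_mul_mul_spow b c k)

/-- With `b^k = s*a*t`: `a*c → c*a → a*t*c → s*a*t*c = b^k*c ⇝ b*c`. -/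
theorem DividesPower.reflTransGen_mul_right {a b : S} (h : DividesPower a b) (c : S) :
    a * c ⇝ b * c := by
  obtain ⟨k, s, t, hk⟩ := dividesPower_iff_exists_spow_eq.mp h
  have hca : DividesPower (c * a) (a * t * c) :=
    .of_spow_eq 1 (s := a * t) (t := t * c) (by simp only [spow, mul_assoc])
  have hatc : DividesPower (a * t * c) (spow b k * c) :=
    .of_spow_eq 1 (s := s) (t := s * a * t * c) (by simp only [spow, hk, mul_assoc])
  exact .head (dividesPower_mul_comm a c) <| .head hca <| .head hatc <| reflTransGen_spow_mul b c k

theorem reflTransGen_mul_right {a b : S} (h : a ⇝ b) (c : S) : a * c ⇝ b * c := by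
  induction h with
  | refl => exact .refl
  | tail _ hstep ih => exact ih.trans (hstep.reflTransGen_mul_right c)

theorem reflTransGen_mul_left {a b : S} (h : a ⇝ b) (c : S) : c * a ⇝ c * b :=
  .head (dividesPower_mul_comm c a) <|
    (reflTransGen_mul_right h c).tail (dividesPower_mul_comm b c)

theorem reflTransGen_mul_iff {x y z : S} : (x * y ⇝ z) ↔ (x ⇝ z) ∧ (y ⇝ z) := by
  refine ⟨fun h => ⟨.head (dividesPower_mul_right x y) h, .head (dividesPower_mul_left x y) h⟩,
    fun ⟨hx, hy⟩ => ?_⟩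
  exact (reflTransGen_mul_right hx y).trans <|
    (reflTransGen_mul_left hy z).tail (dividesPower_mul_self z)

theorem SemilatticeIndecomposable.reflTransGen (h : SemilatticeIndecomposable S) (a b : S) :
    a ⇝ b := by
  let _ : Semigroup (Set S) := { mul := (· ∩ ·), mul_assoc := Set.inter_assoc }
  let f : S →ₙ* Set S :=
    { toFun := fun a => {z | a ⇝ z}
      map_mul' := fun x y => Set.ext fun _ => reflTransGen_mul_iff }
  show b ∈ f a
  rw [h (Set S) Set.inter_comm Set.inter_self f a b]
  exact .refl

section Semilattice

variable {T : Type u} [Semigroup T]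

theorem spow_eq_self_of_idem (hidem : ∀ t : T, t * t = t) (t : T) (k : ℕ) : spow t k = t := by
  induction k with
  | zero => rfl
  | succ k ih => rw [spow, ih, hidem]

theorem MulHom.map_spow (f : S →ₙ* T) (b : S) (k : ℕ) : f (spow b k) = spow (f b) k := by
  induction k with
  | zero => rfl
  | succ k ih => rw [spow, map_mul, ih, spow]

variable (hcomm : ∀ p q : T, p * q = q * p) (hidem : ∀ t : T, t * t = t) (f : S →ₙ* T)
include hcomm hidem

theorem DividesPower.map_mul_map_eq {a b : S} (h : DividesPower a b) : f b * f a = f b := by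
  obtain ⟨k, s, t, hk⟩ := dividesPower_iff_exists_spow_eq.mp h
  have hb : f b = f s * f a * f t := by
    rw [← spow_eq_self_of_idem hidem (f b) k, ← f.map_spow, hk, map_mul, map_mul]
  rw [hb, mul_assoc (f s * f a), hcomm (f t), ← mul_assoc, mul_assoc (f s), hidem]

theorem Relation.ReflTransGen.map_mul_map_eq {a b : S} (h : a ⇝ b) : f b * f a = f b := by
  induction h with
  | refl => exact hidem _
  | @tail b' b _ hstep ih =>
    have hb := hstep.map_mul_map_eq hcomm hidem f
    calc f b * f a = f b * f b' * f a := by rw [hb]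
      _ = f b := by rw [mul_assoc, ih, hb]

end Semilattice

theorem semilatticeIndecomposable_of_forall_reflTransGen (h : ∀ a b : S, a ⇝ b) :
    SemilatticeIndecomposable S := by
  intro T _ hcomm hidem f x y
  calc f x = f x * f y := ((h y x).map_mul_map_eq hcomm hidem f).symm
    _ = f y * f x := hcomm _ _
    _ = f y := (h x y).map_mul_map_eq hcomm hidem f

end Semigroup

/-- A semigroup is semilattice indecomposable iff any two elements are connected by a chain
in which each element divides some positive power of the next. -/
theorem stmt_1 {S : Type u} [Semigroup S] :
    SemilatticeIndecomposable S ↔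
      ∀ a b : S, ∃ n : ℕ, ∃ c : ℕ → S, c 0 = a ∧ c n = b ∧
        ∀ i < n, DividesPower (c i) (c (i + 1)) := by
  simp only [← Relation.reflTransGen_iff_exists_chain]
  exact ⟨SemilatticeIndecomposable.reflTransGen, semilatticeIndecomposable_of_forall_reflTransGen⟩
end

section
/- Let A and B be semigroups with zero elements z_A and z_B, and let A ×₀ B denote the Rees quotient of the direct product A × B by the ideal I = ({z_A} × B) ∪ (A × {z_B}). Then A ×₀ B is semilattice indecomposable if and only if A is semilattice indecomposable or B is semilattice indecomposable. -/
universe u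

def ZProd (A B : Type u) [Zero A] [Zero B] : Type u :=
  Option {p : A × B // p.1 ≠ 0 ∧ p.2 ≠ 0}

variable {A B : Type u} [SemigroupWithZero A] [SemigroupWithZero B]

open Classical in
noncomputable def zmul : ZProd A B → ZProd A B → ZProd A B
  | some p, some q =>
      if h : p.val.1 * q.val.1 ≠ 0 ∧ p.val.2 * q.val.2 ≠ 0 then
        some ⟨(p.val.1 * q.val.1, p.val.2 * q.val.2), h⟩
      else none
  | _, _ => none

theorem zmul_none_left (x : ZProd A B) : zmul none x = none := by cases x <;> rfl
theorem zmul_none_right (x : ZProd A B) : zmul x none = none := by cases x <;> rfl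

open Classical in
theorem zmul_assoc (x y z : ZProd A B) : zmul (zmul x y) z = zmul x (zmul y z) := by
  rcases x with _ | p <;> rcases y with _ | q <;> rcases z with _ | r <;>
    (try simp only [zmul_none_left, zmul_none_right]) <;> try rfl
  have key : ∀ p q : {p : A × B // p.1 ≠ 0 ∧ p.2 ≠ 0}, zmul (some p : ZProd A B) (some q) =
      if h : p.val.1 * q.val.1 ≠ 0 ∧ p.val.2 * q.val.2 ≠ 0 then
        (some ⟨(p.val.1 * q.val.1, p.val.2 * q.val.2), h⟩ : ZProd A B) else none :=
    fun _ _ => rfl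
  by_cases h1 : p.val.1 * q.val.1 ≠ 0 ∧ p.val.2 * q.val.2 ≠ 0 <;>
    by_cases h2 : q.val.1 * r.val.1 ≠ 0 ∧ q.val.2 * r.val.2 ≠ 0
  · rw [key p q, key q r, dif_pos h1, dif_pos h2, key, key]
    split_ifs with h3 h4
    · exact congrArg some (Subtype.ext (by simp [mul_assoc]))
    · exact absurd ⟨by rw [← mul_assoc]; exact h3.1, by rw [← mul_assoc]; exact h3.2⟩ h4
    · exact absurd ⟨by rw [mul_assoc]; exact (by assumption : _ ∧ _).1,
        by rw [mul_assoc]; exact (by assumption : _ ∧ _).2⟩ h3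
    · rfl
  · rw [key p q, key q r, dif_pos h1, dif_neg h2, key]
    rw [dif_neg]
    · rfl
    rcases not_and_or.mp h2 with h2 | h2 <;> push_neg at h2 <;> intro h
    · exact h.1 (by rw [mul_assoc, h2, mul_zero])
    · exact h.2 (by rw [mul_assoc, h2, mul_zero])
  · rw [key p q, key q r, dif_neg h1, dif_pos h2, key]
    rw [dif_neg]
    · rfl
    rcases not_and_or.mp h1 with h1 | h1 <;> push_neg at h1 <;> intro h
    · exact h.1 (by rw [← mul_assoc, h1, zero_mul])
    · exact h.2 (by rw [← mul_assoc, h1, zero_mul])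
  · rw [key p q, key q r, dif_neg h1, dif_neg h2]
    rfl

noncomputable instance : SemigroupWithZero (ZProd A B) where
  zero := none
  mul := zmul
  zero_mul := zmul_none_left
  mul_zero := zmul_none_right
  mul_assoc := zmul_assoc

def IsSemigroupFilter {S : Type*} [Mul S] (F : Set S) : Prop :=
  ∀ x y, x * y ∈ F ↔ x ∈ F ∧ y ∈ F

section Filter

variable {S T : Type*} [Semigroup S] [Semigroup T]

theorem IsSemigroupFilter.preimage {F : Set T} (hF : IsSemigroupFilter F) (f : S →ₙ* T) :
    IsSemigroupFilter (f ⁻¹' F) := fun x y => by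
  simp only [Set.mem_preimage, map_mul, hF (f x) (f y)]

theorem IsSemigroupFilter.prod {F : Set S} {G : Set T} (hF : IsSemigroupFilter F)
    (hG : IsSemigroupFilter G) : IsSemigroupFilter (F ×ˢ G) := fun x y => by
  simp only [Set.mem_prod, Prod.fst_mul, Prod.snd_mul, hF x.1, hG x.2]
  tauto

theorem IsSemigroupFilter.image_fst {G : Set (S × T)} (hG : IsSemigroupFilter G) :
    IsSemigroupFilter (Prod.fst '' G) := by
  refine fun a a' => ⟨?_, ?_⟩
  · rintro ⟨⟨_, b⟩, hab, rfl⟩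
    -- `(a a', b)²` factors both as `(a, b) * (a' a a', b)` and as `(a a' a, b) * (a', b)`.
    have hsq := (hG _ _).2 ⟨hab, hab⟩
    refine ⟨⟨(a, b), ((hG (a, b) (a' * (a * a'), b)).1 ?_).1, rfl⟩,
      ⟨(a', b), ((hG (a * a' * a, b) (a', b)).1 ?_).2, rfl⟩⟩ <;>
      simpa only [Prod.mk_mul_mk, mul_assoc] using hsq
  · rintro ⟨⟨⟨_, b⟩, hab, rfl⟩, ⟨⟨_, b'⟩, hab', rfl⟩⟩
    exact ⟨_ * _, (hG _ _).2 ⟨hab, hab'⟩, rfl⟩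

theorem IsSemigroupFilter.image_snd {G : Set (S × T)} (hG : IsSemigroupFilter G) :
    IsSemigroupFilter (Prod.snd '' G) := by
  have hswap := hG.preimage ((MulHom.snd T S).prod (MulHom.fst T S))
  rw [show ⇑((MulHom.snd T S).prod (MulHom.fst T S)) = Prod.swap from rfl,
    ← Set.image_swap_eq_preimage_swap] at hswap
  simpa only [Set.image_image, Prod.fst_swap, Set.image_id'] using hswap.image_fst

theorem IsSemigroupFilter.zero_notMem {S : Type*} [SemigroupWithZero S] {F : Set S}
    (hF : IsSemigroupFilter F) {y : S} (hy : y ∉ F) : (0 : S) ∉ F := fun h0 =>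
  hy ((hF 0 y).1 (by rwa [zero_mul])).2

end Filter

theorem mul_mul_eq_self_iff {T : Type*} [Semigroup T] (hc : ∀ a b : T, a * b = b * a)
    (hi : ∀ a : T, a * a = a) (t u v : T) : t * (u * v) = t ↔ t * u = t ∧ t * v = t := by
  refine ⟨fun h => ⟨?_, ?_⟩, fun ⟨hu, hv⟩ => by rw [← mul_assoc, hu, hv]⟩
  · calc t * u = t * (u * v) * u := by rw [h]
      _ = t * ((u * u) * v) := by rw [mul_assoc, mul_assoc, hc v u, mul_assoc]
      _ = t := by rw [hi, h]
  · calc t * v = t * (u * v) * v := by rw [h]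
      _ = t * (u * (v * v)) := by rw [mul_assoc, mul_assoc]
      _ = t := by rw [hi, h]

theorem not_semilatticeIndecomposable_iff {S : Type u} [Semigroup S] :
    ¬ SemilatticeIndecomposable S ↔ ∃ F : Set S, IsSemigroupFilter F ∧ ∃ x ∈ F, ∃ y, y ∉ F := by
  classical
  constructor
  · simp only [SemilatticeIndecomposable, not_forall]
    rintro ⟨T, _, hc, hi, f, x, y, hxy⟩
    have hF (t : T) : IsSemigroupFilter {s | t * f s = t} := fun a b => by
      simp only [Set.mem_ofPred_eq, map_mul, mul_mul_eq_self_iff hc hi]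
    by_cases hle : f x * f y = f x
    · refine ⟨_, hF (f y), y, hi _, x, fun hx => hxy ?_⟩
      rw [← hle, hc, hx]
    · exact ⟨_, hF (f x), x, hi _, y, hle⟩
  · rintro ⟨F, hF, x, hx, y, hy⟩ h
    let f : S →ₙ* ULift.{u} Bool :=
      { toFun s := ⟨decide (s ∈ F)⟩
        map_mul' a b := by simp only [hF a b, Bool.decide_and]; rfl }
    have := congrArg ULift.down
      (h _ (fun _ _ => mul_comm _ _) (fun ⟨b⟩ => by cases b <;> rfl) f x y)
    simp [f, hx, hy] at this

namespace ZProd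

open Classical in
noncomputable def mk (s : A × B) : ZProd A B :=
  if h : s.1 ≠ 0 ∧ s.2 ≠ 0 then some ⟨s, h⟩ else 0

theorem mk_of_ne_zero {s : A × B} (h : s.1 ≠ 0 ∧ s.2 ≠ 0) : mk s = some ⟨s, h⟩ := dif_pos h

theorem mk_eq_zero {s : A × B} (h : s.1 = 0 ∨ s.2 = 0) : mk s = 0 :=
  dif_neg fun ⟨h₁, h₂⟩ => h.elim h₁ h₂

theorem mk_mul (s t : A × B) : mk (s * t) = mk s * mk t := by
  by_cases hs : s.1 = 0 ∨ s.2 = 0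
  · rw [mk_eq_zero hs, zero_mul, mk_eq_zero]
    exact hs.imp (fun h => by simp [h]) (fun h => by simp [h])
  by_cases ht : t.1 = 0 ∨ t.2 = 0
  · rw [mk_eq_zero ht, mul_zero, mk_eq_zero]
    exact ht.imp (fun h => by simp [h]) (fun h => by simp [h])
  push Not at hs ht
  rw [mk_of_ne_zero hs, mk_of_ne_zero ht]
  rfl

noncomputable def mkHom : A × B →ₙ* ZProd A B := ⟨mk, mk_mul⟩

theorem mk_zero_left (b : B) : mk ((0 : A), b) = 0 := mk_eq_zero (.inl rfl)

theorem mk_zero_right (a : A) : mk (a, (0 : B)) = 0 := mk_eq_zero (.inr rfl)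

theorem mk_surjective : Function.Surjective (mk : A × B → ZProd A B) := by
  rintro (_ | p)
  · exact ⟨0, mk_zero_left 0⟩
  · exact ⟨p.1, mk_of_ne_zero p.2⟩

theorem mk_mem_image_iff {G : Set (A × B)} (hG : ∀ g ∈ G, g.1 ≠ 0 ∧ g.2 ≠ 0) {s : A × B} :
    mk s ∈ mk '' G ↔ s ∈ G := by
  refine ⟨?_, Set.mem_image_of_mem mk⟩
  rintro ⟨g, hg, hgs⟩
  rw [mk_of_ne_zero (hG g hg)] at hgs
  by_cases hs : s.1 = 0 ∨ s.2 = 0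
  · exact absurd hgs (by rw [mk_eq_zero hs]; exact Option.some_ne_none _)
  push Not at hs
  rw [mk_of_ne_zero hs] at hgs
  obtain rfl : g = s := congrArg Subtype.val (Option.some.inj hgs)
  exact hg

theorem zero_notMem_image_mk {G : Set (A × B)} (hG : ∀ g ∈ G, g.1 ≠ 0 ∧ g.2 ≠ 0) :
    (0 : ZProd A B) ∉ mk '' G := by
  rw [← mk_zero_left 0, mk_mem_image_iff hG]
  exact fun h => (hG _ h).1 rfl

theorem isSemigroupFilter_image_mk {G : Set (A × B)} (hG : IsSemigroupFilter G)
    (hG0 : ∀ g ∈ G, g.1 ≠ 0 ∧ g.2 ≠ 0) : IsSemigroupFilter (mk '' G) := by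
  intro x y
  obtain ⟨s, rfl⟩ := mk_surjective x
  obtain ⟨t, rfl⟩ := mk_surjective y
  simp only [← mk_mul, mk_mem_image_iff hG0, hG s t]

end ZProd

/-- `A ×₀ B` is semilattice indecomposable iff `A` or `B` is. -/
theorem stmt_3 : SemilatticeIndecomposable (ZProd A B) ↔
    SemilatticeIndecomposable A ∨ SemilatticeIndecomposable B := by
  rw [← not_iff_not, not_or]
  simp only [not_semilatticeIndecomposable_iff]
  constructor
  · rintro ⟨F, hF, x, hx, y, hy⟩
    have h0 := hF.zero_notMem hy
    obtain ⟨s, rfl⟩ := ZProd.mk_surjective x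
    have hG := hF.preimage ZProd.mkHom
    refine ⟨⟨_, hG.image_fst, s.1, ⟨s, hx, rfl⟩, 0, ?_⟩,
      ⟨_, hG.image_snd, s.2, ⟨s, hx, rfl⟩, 0, ?_⟩⟩
    · rintro ⟨⟨_, b⟩, hb, rfl⟩
      exact h0 (by rwa [← ZProd.mk_zero_left (A := A) b])
    · rintro ⟨⟨a, _⟩, ha, rfl⟩
      exact h0 (by rwa [← ZProd.mk_zero_right (B := B) a])
  · rintro ⟨⟨FA, hFA, a, ha, a₀, ha₀⟩, ⟨FB, hFB, b, hb, b₀, hb₀⟩⟩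
    have hG0 : ∀ g ∈ FA ×ˢ FB, g.1 ≠ 0 ∧ g.2 ≠ 0 := fun g hg =>
      ⟨ne_of_mem_of_not_mem hg.1 (hFA.zero_notMem ha₀),
        ne_of_mem_of_not_mem hg.2 (hFB.zero_notMem hb₀)⟩
    exact ⟨_, ZProd.isSemigroupFilter_image_mk (hFA.prod hFB) hG0,
      ZProd.mk (a, b), ⟨_, ⟨ha, hb⟩, rfl⟩, 0, ZProd.zero_notMem_image_mk hG0⟩
end

section
/- Every ideal of a semilattice indecomposable semigroup is itself a semilattice indecomposable semigroup. -/
/-!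
For `a ∈ I` and a homomorphism `f` from `I` to a semilattice, the sandwich map
`s ↦ f (a s a)` is a homomorphism on all of `S` (because `f (x a)` absorbs `f a` by
idempotency), hence constant. Comparing `s = u` with `s = v` at `a = u` gives
`f u = f u * f v` for all `u, v ∈ I`, and by commutativity `f` is constant.
-/

universe u

/-- An ideal of a semigroup is a semigroup under the restricted multiplication. -/
def idealSemigroup {S : Type u} [Semigroup S] {I : Set S} (hI : IsIdeal I) :
    Semigroup I where
  mul a b := ⟨a.1 * b.1, (hI.2 a.1 a.2 b.1).2⟩
  mul_assoc a b c := Subtype.ext (mul_assoc a.1 b.1 c.1)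

namespace IsIdeal

variable {S T : Type*} [Semigroup S] [Semigroup T] {I : Set S}

theorem mul_mem_left (hI : IsIdeal I) {a : S} (ha : a ∈ I) (s : S) : s * a ∈ I := (hI.2 a ha s).1

theorem mul_mem_right (hI : IsIdeal I) {a : S} (ha : a ∈ I) (s : S) : a * s ∈ I := (hI.2 a ha s).2

variable (hI : IsIdeal I) (f : @MulHom I T (idealSemigroup hI).toMul _)

theorem map_mk_mul {x y : S} (hx : x ∈ I) (hy : y ∈ I) :
    f ⟨x * y, hI.mul_mem_right hx y⟩ = f ⟨x, hx⟩ * f ⟨y, hy⟩ :=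
  letI := idealSemigroup hI; map_mul f ⟨x, hx⟩ ⟨y, hy⟩

theorem map_mul_left_mul_map_self (hidem : ∀ t : T, t * t = t) {a : S} (ha : a ∈ I) (x : S) :
    f ⟨x * a, hI.mul_mem_left ha x⟩ * f ⟨a, ha⟩ = f ⟨x * a, hI.mul_mem_left ha x⟩ := by
  have hxa := hI.mul_mem_left ha x
  have hxax := hI.mul_mem_right hxa x
  -- `x * a = (x * a) * (x * a) = (x * a * x) * a`
  have hsplit : f ⟨x * a, hxa⟩ = f ⟨x * a * x, hxax⟩ * f ⟨a, ha⟩ := by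
    rw [← hidem (f ⟨x * a, hxa⟩), ← map_mk_mul hI f hxa hxa, ← map_mk_mul hI f hxax ha]
    exact congrArg f (Subtype.ext (by simp only [mul_assoc]))
  rw [hsplit, mul_assoc, hidem]

def sandwichHom (hcomm : ∀ t t' : T, t * t' = t' * t) (hidem : ∀ t : T, t * t = t)
    {a : S} (ha : a ∈ I) : S →ₙ* T where
  toFun s := f ⟨a * s * a, hI.mul_mem_right (hI.mul_mem_right ha s) a⟩
  map_mul' s t := by
    have has := hI.mul_mem_right ha s
    have hta := hI.mul_mem_left ha t
    have hsplit : f ⟨a * (s * t) * a, hI.mul_mem_right (hI.mul_mem_right ha (s * t)) a⟩ =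
        f ⟨a * s, has⟩ * f ⟨t * a, hta⟩ := by
      rw [← map_mk_mul hI f has hta]
      exact congrArg f (Subtype.ext (by simp only [mul_assoc]))
    have hleft : f ⟨a * s * a, hI.mul_mem_right has a⟩ = f ⟨a * s, has⟩ * f ⟨a, ha⟩ :=
      map_mk_mul hI f has ha
    have hright : f ⟨a * t * a, hI.mul_mem_right (hI.mul_mem_right ha t) a⟩ =
        f ⟨a, ha⟩ * f ⟨t * a, hta⟩ := by
      rw [← map_mk_mul hI f ha hta]
      exact congrArg f (Subtype.ext (mul_assoc a t a))
    rw [hsplit, hleft, hright, mul_assoc, ← mul_assoc (f ⟨a, ha⟩), hidem, hcomm (f ⟨a, ha⟩),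
      map_mul_left_mul_map_self hI f hidem ha t]

end IsIdeal

/-- Every ideal of a semilattice indecomposable semigroup is itself semilattice
indecomposable. -/
theorem stmt_8 {S : Type u} [Semigroup S] (hS : SemilatticeIndecomposable S)
    {I : Set S} (hI : IsIdeal I) :
    @SemilatticeIndecomposable I (idealSemigroup hI) := by
  let : Semigroup I := idealSemigroup hI
  intro T _ hcomm hidem f x y
  have hle : ∀ u v : I, f u = f u * f v := by
    intro u v
    have hsandwich := hS T hcomm hidem (hI.sandwichHom f hcomm hidem u.2) u v
    change f (u * u * u) = f (u * v * u) at hsandwich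
    rw [map_mul, map_mul, hidem, hidem, map_mul, map_mul, mul_assoc, hcomm (f v),
      ← mul_assoc, hidem] at hsandwich
    exact hsandwich
  rw [hle x y, hcomm, ← hle y x]
end

section
/- Let S be a finite semilattice indecomposable semigroup with a zero element. If Y is a subsemilattice of S, then |Y| ≤ 2⌊(|S| − 1)/4⌋ + 1. -/
universe u

/-- A subsemilattice of a semigroup: a subsemigroup consisting of pairwise commuting
idempotents. -/
def IsSubsemilattice {S : Type u} [Mul S] (Y : Set S) : Prop :=
  (∀ a ∈ Y, ∀ b ∈ Y, a * b ∈ Y) ∧ (∀ a ∈ Y, a * a = a) ∧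
    (∀ a ∈ Y, ∀ b ∈ Y, a * b = b * a)

/-!
For an idempotent `e ≠ 0`, Green's class `𝓛_e` is not contained in `𝓡_e`, nor `𝓡_e` in `𝓛_e`:
otherwise `{s | s e ∈ 𝓗_e}` (or its dual) would be a filter, hence all of `S` by indecomposability,
and `0 ∈ 𝓗_e` would force `e = 0`. For the nonzero elements `V` of `Y` these `𝓛`-classes are
pairwise disjoint, miss `0` and have at least two elements, so `2|V| + 1 ≤ |S|`.

If `|V|` is odd and `|S| ≤ 2|V| + 2`, then at most one element besides `0` lies outside these
classes, and at most one of them has more than two elements. The first fact puts every element of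
`𝓡_e ∖ 𝓛_e` (`e ∈ V`) into some `𝓛_f` with `f ∈ V ∖ {e}`; the second makes this partner `f` unique,
and inverses within the `𝓓`-class make the partner relation symmetric. So `V` carries a
fixed-point-free involution, contradicting `|V|` odd.
-/

open Finset MulOpposite

theorem Finset.eq_of_lt_of_lt_of_sum_le_sum_add_one {ι : Type*} {s : Finset ι} {f g : ι → ℕ}
    (hfg : ∀ i ∈ s, f i ≤ g i) (hsum : ∑ i ∈ s, g i ≤ ∑ i ∈ s, f i + 1) {i j : ι}
    (hi : i ∈ s) (hj : j ∈ s) (hfgi : f i < g i) (hfgj : f j < g j) : i = j := by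
  classical
  by_contra hij
  have hj' : j ∈ s.erase i := mem_erase.mpr ⟨Ne.symm hij, hj⟩
  have hsplit (h : ι → ℕ) : ∑ k ∈ s, h k = h i + (h j + ∑ k ∈ (s.erase i).erase j, h k) := by
    rw [add_sum_erase _ _ hj', add_sum_erase _ _ hi]
  have hrest : ∑ k ∈ (s.erase i).erase j, f k ≤ ∑ k ∈ (s.erase i).erase j, g k :=
    sum_le_sum fun k hk => hfg k (mem_of_mem_erase (mem_of_mem_erase hk))
  rw [hsplit f, hsplit g] at hsum
  omega

theorem Finset.even_card_of_involution {α : Type*} [DecidableEq α] {s : Finset α} (p : α → α)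
    (hmaps : ∀ a ∈ s, p a ∈ s) (hinv : ∀ a ∈ s, p (p a) = a) (hne : ∀ a ∈ s, p a ≠ a) :
    Even #s := by
  let q : s → s := fun a => ⟨p a, hmaps a a.2⟩
  have hq : Function.Involutive q := fun a => Subtype.ext (hinv a a.2)
  have hsupp : (hq.toPerm q).support = univ := by
    ext a
    simp [q, Subtype.ext_iff, hne a a.2]
  have h2 := Equiv.Perm.two_dvd_card_support (σ := hq.toPerm q) (by ext a; simp [sq, hq a])
  rw [hsupp, card_univ, Fintype.card_coe] at h2
  exact even_iff_two_dvd.mpr h2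

theorem SemilatticeIndecomposable.eq_univ_of_mul_mem_iff {S : Type u} [Semigroup S]
    (hS : SemilatticeIndecomposable S) {U : Set S} (hU : ∀ x y, x * y ∈ U ↔ x ∈ U ∧ y ∈ U)
    (hne : U.Nonempty) : U = Set.univ := by
  classical
  let χ : S →ₙ* ULift.{u} (Fin 2) :=
    { toFun := fun s => ⟨if s ∈ U then 1 else 0⟩
      map_mul' := fun x y => by ext; simp only [hU]; split_ifs <;> simp_all }
  obtain ⟨u, hu⟩ := hne
  refine Set.eq_univ_of_forall fun v => ?_
  have hχ := congrArg ULift.down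
    (hS _ mul_comm (fun a => ULift.ext _ _ (by fin_cases a <;> rfl)) χ v u)
  simpa [χ, hu] using hχ

theorem SemilatticeIndecomposable.mulOpposite {S : Type u} [Semigroup S]
    (hS : SemilatticeIndecomposable S) : SemilatticeIndecomposable Sᵐᵒᵖ := by
  intro T _ hcomm hidem f x y
  let g : S →ₙ* T :=
    { toFun := fun s => f (op s)
      map_mul' := fun a b => by rw [op_mul, map_mul, hcomm] }
  exact hS T hcomm hidem g (unop x) (unop y)

namespace Green

variable {S : Type u} [Semigroup S] {e f g u w x y z : S}

/-- For an idempotent `e` this is Green's `𝓛`-class of `e`; `rClass` is the dual. -/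
def lClass (e : S) : Set S := {u | u * e = u ∧ ∃ c, c * u = e}

def rClass (e : S) : Set S := {u | e * u = u ∧ ∃ c, u * c = e}

theorem mem_lClass_self (he : IsIdempotentElem e) : e ∈ lClass e := ⟨he, e, he⟩

theorem mem_rClass_self (he : IsIdempotentElem e) : e ∈ rClass e := ⟨he, e, he⟩

theorem eq_of_mem_lClass (hef : Commute e f) (hue : u ∈ lClass e) (huf : u ∈ lClass f) :
    e = f := by
  obtain ⟨hue, c, hcu⟩ := hue
  obtain ⟨huf, d, hdu⟩ := huf
  calc e = e * f := by rw [← hcu, mul_assoc, huf]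
    _ = f * e := hef.eq
    _ = f := by rw [← hdu, mul_assoc, hue]

theorem eq_of_mem_rClass (hef : Commute e f) (hue : u ∈ rClass e) (huf : u ∈ rClass f) :
    e = f := by
  obtain ⟨hue, c, huc⟩ := hue
  obtain ⟨huf, d, hud⟩ := huf
  calc e = f * e := by rw [← huc, ← mul_assoc, huf]
    _ = e * f := hef.eq.symm
    _ = f := by rw [← hud, ← mul_assoc, hue]

theorem mem_lClass_of_mul_eq_of_mul_eq {a b x y : S} (hy : y ∈ lClass g) (hx : a * y = x)
    (hy' : b * x = y) : x ∈ lClass g := by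
  obtain ⟨hyg, c, hc⟩ := hy
  exact ⟨by rw [← hx, mul_assoc, hyg], c * b, by rw [mul_assoc, hy', hc]⟩

theorem op_mem_lClass_op : op u ∈ lClass (op e) ↔ u ∈ rClass e := by
  simp only [lClass, rClass, Set.mem_ofPred_eq, op_surjective.exists, ← op_mul, op_inj]

theorem op_mem_rClass_op : op u ∈ rClass (op e) ↔ u ∈ lClass e := by
  simp only [lClass, rClass, Set.mem_ofPred_eq, op_surjective.exists, ← op_mul, op_inj]

theorem mul_mem_lClass_inter_rClass (hu : u ∈ lClass e ∩ rClass e)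
    (hw : w ∈ lClass e ∩ rClass e) : u * w ∈ lClass e ∩ rClass e := by
  obtain ⟨⟨hue, c, hcu⟩, heu, d, hud⟩ := hu
  obtain ⟨⟨hwe, c', hcw⟩, hew, d', hwd⟩ := hw
  refine ⟨⟨by rw [mul_assoc, hwe], c' * c, ?_⟩, ⟨by rw [← mul_assoc, heu], d' * d, ?_⟩⟩
  · rw [mul_assoc, ← mul_assoc c u w, hcu, hew, hcw]
  · rw [mul_assoc, ← mul_assoc w d' d, hwd, ← mul_assoc u e d, hue, hud]

theorem exists_mul_eq_of_mem_lClass_inter_rClass (he : IsIdempotentElem e)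
    (hu : u ∈ lClass e ∩ rClass e) : ∃ v ∈ lClass e ∩ rClass e, u * v = e := by
  obtain ⟨⟨hue, c, hcu⟩, heu, d, hud⟩ := hu
  have hce : c * e = e * d := by
    calc c * e = c * (u * d) := by rw [hud]
      _ = e * d := by rw [← mul_assoc, hcu]
  have hvu : e * d * e * u = e := by rw [mul_assoc, heu, ← hce, mul_assoc, heu, hcu]
  have huv : u * (e * d * e) = e := by rw [← mul_assoc, ← mul_assoc, hue, hud, he]
  exact ⟨e * d * e, ⟨⟨by rw [mul_assoc, he], u, huv⟩,
    ⟨by rw [← mul_assoc, ← mul_assoc, he], u, hvu⟩⟩, huv⟩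

theorem exists_mem_lClass_notMem_rClass
    (hS : SemilatticeIndecomposable S) (hz : ∀ x, z * x = z) (he : IsIdempotentElem e)
    (hez : e ≠ z) : ∃ u ∈ lClass e, u ∉ rClass e := by
  by_contra! hLR
  have hfilter : ∀ x y : S, x * y * e ∈ lClass e ∩ rClass e ↔
      x * e ∈ lClass e ∩ rClass e ∧ y * e ∈ lClass e ∩ rClass e := by
    intro x y
    constructor
    · intro hxy
      obtain ⟨c, hc⟩ := hxy.1.2
      have hyL : y * e ∈ lClass e :=
        ⟨by rw [mul_assoc, he.eq], c * x, by simp only [mul_assoc] at hc ⊢; exact hc⟩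
      obtain ⟨v, hv, hyv⟩ := exists_mul_eq_of_mem_lClass_inter_rClass he ⟨hyL, hLR _ hyL⟩
      have hx : x * y * e * v = x * e := by simp only [mul_assoc] at hyv ⊢; rw [hyv]
      exact ⟨hx ▸ mul_mem_lClass_inter_rClass hxy hv, hyL, hLR _ hyL⟩
    · rintro ⟨hx, hy⟩
      have hxy : x * y * e = x * e * (y * e) := by rw [mul_assoc x e, hy.2.1, mul_assoc]
      exact hxy ▸ mul_mem_lClass_inter_rClass hx hy
  have hU := hS.eq_univ_of_mul_mem_iff (U := {s | s * e ∈ lClass e ∩ rClass e}) hfilter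
    ⟨e, by simp only [Set.mem_ofPred_eq, he.eq]; exact ⟨mem_lClass_self he, mem_rClass_self he⟩⟩
  have hzH : z * e ∈ lClass e ∩ rClass e := Set.eq_univ_iff_forall.mp hU z
  obtain ⟨c, hc⟩ := (hz e ▸ hzH).2.2
  exact hez (hc.symm.trans (hz c))

theorem exists_mem_rClass_notMem_lClass
    (hS : SemilatticeIndecomposable S) (hz : ∀ x, x * z = z) (he : IsIdempotentElem e)
    (hez : e ≠ z) : ∃ u ∈ rClass e, u ∉ lClass e := by
  obtain ⟨u, hu, hnu⟩ := exists_mem_lClass_notMem_rClass hS.mulOpposite (z := op z)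
    (fun x => congrArg op (hz x.unop)) (congrArg op he.eq) (op_injective.ne hez)
  exact ⟨unop u, op_mem_lClass_op.mp hu, fun h => hnu (op_mem_rClass_op.mpr h)⟩

theorem exists_inverse_of_mem_rClass_inter_lClass (he : IsIdempotentElem e)
    (hf : IsIdempotentElem f) (hw : w ∈ rClass e ∩ lClass f) :
    ∃ t ∈ rClass f ∩ lClass e, w * t = e ∧ t * w = f := by
  obtain ⟨⟨hew, y, hwy⟩, hwf, x, hxw⟩ := hw
  have hwt : w * (f * y * e) = e := by rw [← mul_assoc, ← mul_assoc, hwf, hwy, he.eq]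
  have htw : f * y * e * w = f :=
    calc f * y * e * w = f * (y * w) := by rw [mul_assoc, hew, mul_assoc]
      _ = x * (w * (y * w)) := by rw [← hxw, mul_assoc]
      _ = f := by rw [← mul_assoc w, hwy, hew, hxw]
  exact ⟨f * y * e, ⟨⟨by rw [← mul_assoc, ← mul_assoc, hf.eq], w, htw⟩,
    ⟨by rw [mul_assoc, he.eq], w, hwt⟩⟩, hwt, htw⟩

theorem exists_mem_lClass_of_subsingleton {V : Set S} (hz : ∀ x, z * x = z ∧ x * z = z)
    (hez : e ≠ z) (hx : x ∈ rClass e) (hy : y ∈ lClass e) (hye : y ≠ e)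
    (hV : ((⋃ g ∈ V, lClass g)ᶜ \ {z}).Subsingleton) : ∃ g ∈ V, x ∈ lClass g := by
  obtain ⟨hex, a, hxa⟩ := hx
  obtain ⟨hye', b, hby⟩ := hy
  -- `y x` is `𝓛`-related to `x` but differs from it, as `y x a = y ≠ e = x a`.
  have hyx : b * (y * x) = x := by rw [← mul_assoc, hby, hex]
  have hyxa : y * x * a = y := by rw [mul_assoc, hxa, hye']
  by_contra! hxV
  have hxz : x ≠ z := fun h => hez (by rw [← hxa, h, (hz a).1])
  have hyxz : y * x ≠ z := fun h => hez (by rw [← hby, ← hyxa, h, (hz a).1, (hz b).2])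
  have hxN : x ∈ (⋃ g ∈ V, lClass g)ᶜ \ {z} := by
    simpa [hxz] using hxV
  have hyxN : y * x ∈ (⋃ g ∈ V, lClass g)ᶜ \ {z} := by
    simpa [hyxz] using fun g hg h => hxV g hg (mem_lClass_of_mul_eq_of_mul_eq h hyx rfl)
  exact hye (by rw [← hyxa, ← hV hxN hyxN, hxa])

theorem exists_partner (hS : SemilatticeIndecomposable S) (hz : ∀ x, z * x = z ∧ x * z = z)
    {V : Set S} (he : IsIdempotentElem e) (hez : e ≠ z)
    (hV : ((⋃ g ∈ V, lClass g)ᶜ \ {z}).Subsingleton) :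
    ∃ f ∈ V, f ≠ e ∧ (rClass e ∩ lClass f).Nonempty := by
  obtain ⟨x, hx, hxL⟩ := exists_mem_rClass_notMem_lClass hS (fun x => (hz x).2) he hez
  obtain ⟨y, hy, hyR⟩ := exists_mem_lClass_notMem_rClass hS (fun x => (hz x).1) he hez
  obtain ⟨f, hf, hxf⟩ := exists_mem_lClass_of_subsingleton hz hez hx hy
    (by rintro rfl; exact hyR (mem_rClass_self he)) hV
  exact ⟨f, hf, by rintro rfl; exact hxL hxf, x, hx, hxf⟩

theorem two_lt_ncard_lClass_of_two_partners [Finite S] {f' w' : S} (he : IsIdempotentElem e)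
    (hf : IsIdempotentElem f) (hf' : IsIdempotentElem f') (hef : Commute e f)
    (hef' : Commute e f') (hff' : Commute f f') (hw : w ∈ rClass e ∩ lClass f)
    (hw' : w' ∈ rClass e ∩ lClass f') (hne : e ≠ f) (hne' : e ≠ f') (hfne : f ≠ f') :
    2 < (lClass e).ncard ∧ 2 < (lClass f').ncard := by
  obtain ⟨t, ⟨htf, hte⟩, hwt, -⟩ := exists_inverse_of_mem_rClass_inter_lClass he hf hw
  obtain ⟨t', ⟨htf', hte'⟩, hwt', htw'⟩ := exists_inverse_of_mem_rClass_inter_lClass he hf' hw'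
  have htt' : t ≠ t' := fun h => hfne (eq_of_mem_rClass hff' htf (h ▸ htf'))
  have hte_ne : t ≠ e := fun h => hne (eq_of_mem_rClass hef (mem_rClass_self he) (h ▸ htf))
  have hte_ne' : t' ≠ e := fun h => hne' (eq_of_mem_rClass hef' (mem_rClass_self he) (h ▸ htf'))
  have hw'_ne : w' ≠ f' := fun h => hne' (eq_of_mem_rClass hef' (h ▸ hw'.1) (mem_rClass_self hf'))
  have htw'L : t * w' ∈ lClass f' :=
    ⟨by rw [mul_assoc, hw'.2.1], t' * w, by rw [mul_assoc, ← mul_assoc w, hwt, hw'.1.1, htw']⟩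
  have htw't' : t * w' * t' = t := by rw [mul_assoc, hwt', hte.1]
  have htw'_ne : t * w' ≠ f' := fun h => htt' (by rw [← htw't', h, htf'.1])
  have htw'_ne' : t * w' ≠ w' := fun h => hte_ne (by rw [← htw't', h, hwt'])
  exact ⟨(Set.two_lt_ncard_iff).mpr ⟨e, t, t', mem_lClass_self he, hte, hte', hte_ne.symm,
      hte_ne'.symm, htt'⟩,
    (Set.two_lt_ncard_iff).mpr ⟨f', w', t * w', mem_lClass_self hf', hw'.2, htw'L, hw'_ne.symm,
      htw'_ne.symm, htw'_ne'.symm⟩⟩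

theorem zero_notMem_lClass {g : S} (hz : ∀ x, x * z = z) (hgz : g ≠ z) : z ∉ lClass g :=
  fun ⟨_, c, hc⟩ => hgz (hc.symm.trans (hz c))

theorem two_le_ncard_lClass [Finite S]
    (hS : SemilatticeIndecomposable S) (hz : ∀ x, z * x = z) (he : IsIdempotentElem e)
    (hez : e ≠ z) : 2 ≤ (lClass e).ncard := by
  obtain ⟨u, hu, huR⟩ := exists_mem_lClass_notMem_rClass hS hz he hez
  exact (Set.one_lt_ncard_iff).mpr
    ⟨e, u, mem_lClass_self he, hu, fun h => huR (h ▸ mem_rClass_self he)⟩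

theorem sum_ncard_lClass_add_ncard_compl [Fintype S] {V : Finset S}
    (hcomm : ∀ e ∈ V, ∀ f ∈ V, Commute e f) :
    ∑ g ∈ V, (lClass g).ncard + (⋃ g ∈ V, lClass g)ᶜ.ncard = Fintype.card S := by
  have hdisj : (V : Set S).PairwiseDisjoint lClass := fun e he f hf hef =>
    Set.disjoint_left.mpr fun u hue huf => hef (eq_of_mem_lClass (hcomm e he f hf) hue huf)
  rw [← Nat.card_eq_fintype_card, ← Set.ncard_add_ncard_compl (⋃ g ∈ V, lClass g),
    ← Finset.set_biUnion_coe, V.finite_toSet.ncard_biUnion (fun _ _ => Set.toFinite _) hdisj,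
    finsum_mem_coe_finset]

theorem two_mul_card_le_sum_ncard_lClass [Finite S] (hS : SemilatticeIndecomposable S)
    (hz : ∀ x, z * x = z) {V : Finset S} (hzV : z ∉ V)
    (hidem : ∀ e ∈ V, IsIdempotentElem e) : 2 * #V ≤ ∑ g ∈ V, (lClass g).ncard := by
  simpa [mul_comm] using card_nsmul_le_sum V _ 2 fun g hg =>
    two_le_ncard_lClass hS hz (hidem g hg) (ne_of_mem_of_not_mem hg hzV)

theorem zero_mem_compl_biUnion_lClass (hz : ∀ x, x * z = z) {V : Finset S} (hzV : z ∉ V) :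
    z ∈ (⋃ g ∈ V, lClass g)ᶜ := by
  simpa using fun g hg => zero_notMem_lClass hz (ne_of_mem_of_not_mem hg hzV)

theorem two_mul_card_add_one_le [Fintype S] (hS : SemilatticeIndecomposable S)
    (hz : ∀ x, z * x = z ∧ x * z = z) {V : Finset S} (hzV : z ∉ V)
    (hidem : ∀ e ∈ V, IsIdempotentElem e) (hcomm : ∀ e ∈ V, ∀ f ∈ V, Commute e f) :
    2 * #V + 1 ≤ Fintype.card S := by
  have hcard := sum_ncard_lClass_add_ncard_compl hcomm
  have hsum := two_mul_card_le_sum_ncard_lClass hS (fun x => (hz x).1) hzV hidem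
  have hcompl := (Set.ncard_pos).mpr ⟨z, zero_mem_compl_biUnion_lClass (fun x => (hz x).2) hzV⟩
  omega

theorem two_mul_card_add_three_le_of_odd [Fintype S] (hS : SemilatticeIndecomposable S)
    (hz : ∀ x, z * x = z ∧ x * z = z) {V : Finset S} (hzV : z ∉ V)
    (hidem : ∀ e ∈ V, IsIdempotentElem e) (hcomm : ∀ e ∈ V, ∀ f ∈ V, Commute e f)
    (hodd : Odd #V) : 2 * #V + 3 ≤ Fintype.card S := by
  classical
  by_contra! htight
  have hcard := sum_ncard_lClass_add_ncard_compl hcomm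
  have hsum := two_mul_card_le_sum_ncard_lClass hS (fun x => (hz x).1) hzV hidem
  have hzC := zero_mem_compl_biUnion_lClass (fun x => (hz x).2) hzV
  have hcompl := (Set.ncard_pos).mpr ⟨z, hzC⟩
  have hN : ((⋃ g ∈ V, lClass g)ᶜ \ {z}).Subsingleton := by
    rw [← Set.ncard_le_one_iff_subsingleton, Set.ncard_sdiff_singleton_of_mem hzC]
    omega
  have hexcess : ∀ e ∈ V, ∀ f ∈ V, 2 < (lClass e).ncard → 2 < (lClass f).ncard → e = f :=
    fun e he f hf => eq_of_lt_of_lt_of_sum_le_sum_add_one (f := fun _ => 2)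
      (fun g hg => two_le_ncard_lClass hS (fun x => (hz x).1) (hidem g hg)
        (ne_of_mem_of_not_mem hg hzV)) (by simp only [sum_const, smul_eq_mul]; omega) he hf
  have hpartner : ∀ e ∈ V, ∃ f ∈ V, f ≠ e ∧ (rClass e ∩ lClass f).Nonempty := fun e he =>
    exists_partner hS hz (hidem e he) (ne_of_mem_of_not_mem he hzV) hN
  have huniq : ∀ e ∈ V, ∀ f ∈ V, ∀ f' ∈ V, f ≠ e → f' ≠ e → (rClass e ∩ lClass f).Nonempty →
      (rClass e ∩ lClass f').Nonempty → f = f' := by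
    rintro e he f hf f' hf' hfe hf'e ⟨w, hw⟩ ⟨w', hw'⟩
    by_contra hff'
    obtain ⟨h1, h2⟩ := two_lt_ncard_lClass_of_two_partners (hidem e he) (hidem f hf)
      (hidem f' hf') (hcomm e he f hf) (hcomm e he f' hf') (hcomm f hf f' hf') hw hw'
      hfe.symm hf'e.symm hff'
    exact hf'e (hexcess e he f' hf' h1 h2).symm
  choose! p hpV hpne hpD using hpartner
  refine Nat.not_even_iff_odd.mpr hodd (even_card_of_involution p hpV (fun e he => ?_) hpne)
  obtain ⟨w, hw⟩ := hpD e he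
  obtain ⟨t, ht, -⟩ :=
    exists_inverse_of_mem_rClass_inter_lClass (hidem e he) (hidem _ (hpV e he)) hw
  exact huniq _ (hpV e he) _ (hpV _ (hpV e he)) e he (hpne _ (hpV e he)) (hpne e he).symm
    (hpD _ (hpV e he)) ⟨t, ht⟩

end Green

/-- If `S` is a finite semilattice indecomposable semigroup with a zero and `Y` is a
subsemilattice of `S`, then `|Y| ≤ 2⌊(|S|-1)/4⌋ + 1`. -/
theorem stmt_10 {S : Type u} [Semigroup S] [Fintype S]
    (hS : SemilatticeIndecomposable S)
    (z : S) (hz : ∀ x : S, z * x = z ∧ x * z = z)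
    (Y : Set S) (hY : IsSubsemilattice Y) :
    Y.ncard ≤ 2 * ((Fintype.card S - 1) / 4) + 1 := by
  classical
  obtain ⟨-, hidem, hcomm⟩ := hY
  set V := (Set.toFinite Y).toFinset.erase z
  have hVY : ∀ e ∈ V, e ∈ Y := fun e he => (Set.Finite.mem_toFinset _).mp (mem_of_mem_erase he)
  have hzV : z ∉ V := notMem_erase z _
  have hidemV : ∀ e ∈ V, IsIdempotentElem e := fun e he => hidem e (hVY e he)
  have hcommV : ∀ e ∈ V, ∀ f ∈ V, Commute e f := fun e he f hf =>
    hcomm e (hVY e he) f (hVY f hf)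
  have hYV : Y.ncard ≤ #V + 1 := by
    rw [Set.ncard_eq_toFinset_card Y]
    exact Nat.sub_le_iff_le_add.mp pred_card_le_card_erase
  have h1 := Green.two_mul_card_add_one_le hS hz hzV hidemV hcommV
  have h2 := Green.two_mul_card_add_three_le_of_odd hS hz hzV hidemV hcommV
  rcases Nat.even_or_odd #V with ⟨m, hm⟩ | ⟨m, hm⟩
  · omega
  · have := h2 ⟨m, hm⟩
    omega
end

section
/- Let S be a finite semilattice indecomposable semigroup (not necessarily with zero). If Y is a subsemilattice of S, then |Y| ≤ 2⌊(|S| − 1)/4⌋ + 1. -/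
universe u

/-!
Work in `S¹ = WithOne S` with Green's preorders `≤_R`, `≤_L`, `≤_J`. Let `e` be an idempotent
outside the minimal ideal of `S`. Its `J`-class `J` is not closed under products: otherwise
`{x | e ≤_J x}` would be a filter, i.e. the preimage of `⊤` under a morphism to the two-element
semilattice, and indecomposability would make it all of `S`. Hence `J` has at least two `R`-classes
and two `L`-classes. Distinct commuting idempotents lie in distinct `R`- and `L`-classes, and by
stability of finite semigroups every `R`-class of `J` meets every `L`-class of `J`; so if `J`
contains `m` elements of `Y`, then `|J| ≥ max(2, m)² ≥ 4⌈m/2⌉`. The minimal ideal meets `Y` at most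
once, and summing over `J`-classes gives `|S| ≥ 4⌊|Y|/2⌋ + 1`.
-/

instance {α : Type*} [Finite α] : Finite αᵐᵒᵖ := Finite.of_equiv α MulOpposite.opEquiv

instance {α : Type*} [Finite α] : Finite (WithOne α) := inferInstanceAs (Finite (Option α))

namespace Green

variable {M : Type*} [Monoid M] {a b c e f x y : M}

def RLe (a b : M) : Prop := ∃ x, a = b * x

def LLe (a b : M) : Prop := ∃ x, a = x * b

def JLe (a b : M) : Prop := ∃ x y, a = x * b * y

def REquiv (a b : M) : Prop := RLe a b ∧ RLe b a

def LEquiv (a b : M) : Prop := LLe a b ∧ LLe b a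

def JEquiv (a b : M) : Prop := JLe a b ∧ JLe b a

def jClass (e : M) : Set M := {c | JEquiv c e}

theorem RLe.refl (a : M) : RLe a a := ⟨1, (mul_one a).symm⟩

theorem RLe.trans : RLe a b → RLe b c → RLe a c := by
  rintro ⟨x, rfl⟩ ⟨y, rfl⟩
  exact ⟨y * x, mul_assoc c y x⟩

theorem rLe_mul_right (a x : M) : RLe (a * x) a := ⟨x, rfl⟩

theorem LLe.refl (a : M) : LLe a a := ⟨1, (one_mul a).symm⟩

theorem LLe.trans : LLe a b → LLe b c → LLe a c := by
  rintro ⟨x, rfl⟩ ⟨y, rfl⟩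
  exact ⟨x * y, (mul_assoc x y c).symm⟩

theorem lLe_mul_left (x a : M) : LLe (x * a) a := ⟨x, rfl⟩

theorem JLe.refl (a : M) : JLe a a := ⟨1, 1, by simp⟩

theorem JLe.trans : JLe a b → JLe b c → JLe a c := by
  rintro ⟨x, y, rfl⟩ ⟨x', y', rfl⟩
  exact ⟨x * x', y' * y, by simp only [mul_assoc]⟩

theorem RLe.jLe : RLe a b → JLe a b := by
  rintro ⟨x, rfl⟩
  exact ⟨1, x, by rw [one_mul]⟩

theorem LLe.jLe : LLe a b → JLe a b := by
  rintro ⟨x, rfl⟩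
  exact ⟨x, 1, by rw [mul_one]⟩

theorem jLe_mul_right (a x : M) : JLe (a * x) a := (rLe_mul_right a x).jLe

theorem jLe_mul_left (x a : M) : JLe (x * a) a := (lLe_mul_left x a).jLe

theorem REquiv.refl (a : M) : REquiv a a := ⟨.refl a, .refl a⟩

theorem REquiv.symm (h : REquiv a b) : REquiv b a := ⟨h.2, h.1⟩

theorem REquiv.trans (h : REquiv a b) (h' : REquiv b c) : REquiv a c :=
  ⟨h.1.trans h'.1, h'.2.trans h.2⟩

theorem LEquiv.symm (h : LEquiv a b) : LEquiv b a := ⟨h.2, h.1⟩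

theorem LEquiv.trans (h : LEquiv a b) (h' : LEquiv b c) : LEquiv a c :=
  ⟨h.1.trans h'.1, h'.2.trans h.2⟩

theorem JEquiv.refl (a : M) : JEquiv a a := ⟨.refl a, .refl a⟩

theorem JEquiv.symm (h : JEquiv a b) : JEquiv b a := ⟨h.2, h.1⟩

theorem JEquiv.trans (h : JEquiv a b) (h' : JEquiv b c) : JEquiv a c :=
  ⟨h.1.trans h'.1, h'.2.trans h.2⟩

theorem jClass_eq_jClass_iff : jClass a = jClass b ↔ JEquiv a b := by
  refine ⟨fun h => show a ∈ jClass b from h ▸ JEquiv.refl a, fun h => ?_⟩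
  exact Set.ext fun c => ⟨fun hc => hc.trans h, fun hc => hc.trans h.symm⟩

open _root_.MulOpposite in
theorem rLe_op_iff : RLe (op a) (op b) ↔ LLe a b :=
  ⟨fun ⟨x, h⟩ => ⟨unop x, op_injective h⟩, fun ⟨x, h⟩ => ⟨op x, unop_injective h⟩⟩

open _root_.MulOpposite in
theorem jLe_op_iff : JLe (op a) (op b) ↔ JLe a b :=
  ⟨fun ⟨x, y, h⟩ => ⟨unop y, unop x, op_injective (by rw [h]; simp [mul_assoc])⟩,
    fun ⟨x, y, h⟩ => ⟨op y, op x, unop_injective (by rw [h]; simp [mul_assoc])⟩⟩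

theorem exists_isIdempotentElem_pow_succ [Finite M] (b : M) :
    ∃ n, IsIdempotentElem (b ^ (n + 1)) := by
  let _ : TopologicalSpace M := ⊥
  have : DiscreteTopology M := ⟨rfl⟩
  obtain ⟨_, ⟨n, rfl⟩, h⟩ := exists_idempotent_in_compact_subsemigroup
    (fun _ => continuous_of_discreteTopology) (Set.range fun n : ℕ => b ^ (n + 1))
    ⟨_, 0, rfl⟩ (Set.toFinite _).isCompact
    (by rintro _ ⟨m, rfl⟩ _ ⟨n, rfl⟩; exact ⟨m + n + 1, by rw [← pow_add]; ring_nf⟩)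
  exact ⟨n, h⟩

theorem eq_pow_mul_mul_pow (h : x = a * x * b) (n : ℕ) : x = a ^ n * x * b ^ n := by
  induction n with
  | zero => simp
  | succ n ih =>
    calc x = a ^ n * (a * x * b) * b ^ n := by rw [← h]; exact ih
      _ = a ^ (n + 1) * x * b ^ (n + 1) := by rw [pow_succ a, pow_succ' b]; simp only [mul_assoc]

theorem rLe_mul_of_eq_mul_mul [Finite M] (h : x = a * x * b) : RLe x (x * b) := by
  obtain ⟨n, hn⟩ := exists_isIdempotentElem_pow_succ b
  have hx := eq_pow_mul_mul_pow h (n + 1)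
  refine ⟨b ^ n, ?_⟩
  calc x = a ^ (n + 1) * x * (b ^ (n + 1) * b ^ (n + 1)) := by rw [hn.eq]; exact hx
    _ = x * b ^ (n + 1) := by rw [← mul_assoc, ← hx]
    _ = x * b * b ^ n := by rw [pow_succ', mul_assoc]

theorem RLe.rLe_of_jLe [Finite M] (hab : RLe a b) (hba : JLe b a) : RLe b a := by
  obtain ⟨s, rfl⟩ := hab
  obtain ⟨x, y, hb⟩ := hba
  have hb' : b = x * b * (s * y) := by simpa only [mul_assoc] using hb
  exact (rLe_mul_of_eq_mul_mul hb').trans ⟨y, (mul_assoc b s y).symm⟩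

theorem LLe.lLe_of_jLe [Finite M] (hab : LLe a b) (hba : JLe b a) : LLe b a :=
  rLe_op_iff.mp ((rLe_op_iff.mpr hab).rLe_of_jLe (jLe_op_iff.mpr hba))

theorem REquiv.jEquiv (h : REquiv a b) : JEquiv a b := ⟨h.1.jLe, h.2.jLe⟩

open _root_.MulOpposite in
theorem rEquiv_op_iff : REquiv (op a) (op b) ↔ LEquiv a b :=
  and_congr rLe_op_iff rLe_op_iff

open _root_.MulOpposite in
theorem jEquiv_op_iff : JEquiv (op a) (op b) ↔ JEquiv a b :=
  and_congr jLe_op_iff jLe_op_iff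

theorem JEquiv.exists_rEquiv_lEquiv [Finite M] (h : JEquiv a b) :
    ∃ x, REquiv x a ∧ LEquiv x b := by
  obtain ⟨p, q, hb⟩ := h.2
  have hxa : RLe (a * q) a := rLe_mul_right a q
  have hbx : LLe b (a * q) := ⟨p, by rw [hb, mul_assoc]⟩
  exact ⟨a * q, ⟨hxa, hxa.rLe_of_jLe (h.1.trans hbx.jLe)⟩,
    ⟨hbx.lLe_of_jLe (hxa.jLe.trans h.1), hbx⟩⟩

theorem eq_of_rEquiv (he : IsIdempotentElem e) (hf : IsIdempotentElem f) (hef : Commute e f)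
    (h : REquiv e f) : e = f := by
  obtain ⟨⟨x, hx⟩, ⟨y, hy⟩⟩ := h
  calc e = f * e := by rw [hx, ← mul_assoc, hf.eq]
    _ = e * f := hef.eq.symm
    _ = f := by rw [hy, ← mul_assoc, he.eq]

theorem eq_of_lEquiv (he : IsIdempotentElem e) (hf : IsIdempotentElem f) (hef : Commute e f)
    (h : LEquiv e f) : e = f := by
  obtain ⟨⟨x, hx⟩, ⟨y, hy⟩⟩ := h
  calc e = e * f := by rw [hx, mul_assoc, hf.eq]
    _ = f * e := hef.eq
    _ = f := by rw [hy, mul_assoc, he.eq]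

theorem eq_mul_of_jLe_mul [Finite M] (he : IsIdempotentElem e) (hf : IsIdempotentElem f)
    (hef : Commute e f) (h : JLe e (e * f)) : e = e * f :=
  eq_of_rEquiv he (he.mul_of_commute hef hf) ((Commute.refl e).mul_right hef)
    ⟨(rLe_mul_right e f).rLe_of_jLe h, rLe_mul_right e f⟩

theorem exists_jEquiv_not_jLe_mul (he : IsIdempotentElem e) (hx : JLe e x) (hy : JLe e y)
    (hxy : ¬ JLe e (x * y)) : ∃ u v, JEquiv u e ∧ JEquiv v e ∧ ¬ JLe e (u * v) := by
  obtain ⟨p, q, hpq⟩ := hx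
  obtain ⟨p', q', hpq'⟩ := hy
  refine ⟨e * p * x, y * q' * e, ⟨⟨1, p * x, by simp only [one_mul, mul_assoc]⟩, 1, q * e, ?_⟩,
    ⟨⟨y * q', 1, by simp only [mul_one, mul_assoc]⟩, e * p', 1, ?_⟩, ?_⟩
  · calc e = e * e * e := by rw [he.eq, he.eq]
      _ = e * (p * x * q) * e := by rw [← hpq]
      _ = 1 * (e * p * x) * (q * e) := by simp only [one_mul, mul_assoc]
  · calc e = e * e * e := by rw [he.eq, he.eq]
      _ = e * (p' * y * q') * e := by rw [← hpq']
      _ = e * p' * (y * q' * e) * 1 := by simp only [mul_one, mul_assoc]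
  · rintro ⟨a, b, h⟩
    exact hxy ⟨a * e * p, q' * e * b, h.trans (by simp only [mul_assoc])⟩

theorem exists_not_rEquiv (he : IsIdempotentElem e) {u v : M} (hu : JEquiv u e)
    (hv : JEquiv v e) (huv : ¬ JLe e (u * v)) :
    ∃ c ∈ jClass e, ∃ d ∈ jClass e, ¬ REquiv c d := by
  -- If `jClass e` were a single `R`-class, then `e = u * s`, `e = v * w` and `e = s * u * r`,
  -- and `u * s * u = e * u = u` turns the last one into `e = s * (u * v) * w`.
  by_contra! h
  obtain ⟨s, hs⟩ := (h e (JEquiv.refl e) u hu).1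
  obtain ⟨t, ht⟩ := (h u hu e (JEquiv.refl e)).1
  have heu : e * u = u := by rw [ht, ← mul_assoc, he.eq]
  have hsu : s * u ∈ jClass e := by
    refine ⟨(jLe_mul_left s u).trans hu.1, u, s, ?_⟩
    calc e = e * e := he.eq.symm
      _ = u * s * (u * s) := by rw [← hs]
      _ = u * (s * u) * s := by simp only [mul_assoc]
  obtain ⟨r, hr⟩ := (h e (JEquiv.refl e) (s * u) hsu).1
  obtain ⟨w, hw⟩ := (h e (JEquiv.refl e) v hv).1
  refine huv ⟨s, w, ?_⟩
  calc e = s * u * r := hr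
    _ = s * (e * u) * r := by rw [heu]
    _ = s * u * (s * u * r) := by rw [hs]; simp only [mul_assoc]
    _ = s * u * (v * w) := by rw [← hr, ← hw]
    _ = s * (u * v) * w := by simp only [mul_assoc]

open _root_.MulOpposite in
theorem exists_not_lEquiv (he : IsIdempotentElem e) {u v : M} (hu : JEquiv u e)
    (hv : JEquiv v e) (huv : ¬ JLe e (u * v)) :
    ∃ c ∈ jClass e, ∃ d ∈ jClass e, ¬ LEquiv c d := by
  obtain ⟨c, hc, d, hd, hcd⟩ := exists_not_rEquiv (e := op e) (congrArg op he.eq)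
    (jEquiv_op_iff.mpr hv) (jEquiv_op_iff.mpr hu) (by rwa [← op_mul, jLe_op_iff])
  exact ⟨unop c, jEquiv_op_iff.mp hc, unop d, jEquiv_op_iff.mp hd, mt rEquiv_op_iff.mpr hcd⟩

theorem ncard_mul_ncard_le_ncard_jClass [Finite M] {P Q : Set M} (hP : P ⊆ jClass e)
    (hQ : Q ⊆ jClass e) (hPR : P.Pairwise fun a b => ¬ REquiv a b)
    (hQL : Q.Pairwise fun a b => ¬ LEquiv a b) : P.ncard * Q.ncard ≤ (jClass e).ncard := by
  have hcell (a : P) (b : Q) : ∃ x, REquiv x (a : M) ∧ LEquiv x (b : M) :=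
    ((hP a.2).trans (hQ b.2).symm).exists_rEquiv_lEquiv
  choose x hxR hxL using hcell
  let F : P × Q → jClass e := fun p => ⟨x p.1 p.2, (hxR p.1 p.2).jEquiv.trans (hP p.1.2)⟩
  have hF : F.Injective := by
    rintro ⟨a, b⟩ ⟨a', b'⟩ h
    have hx : x a b = x a' b' := congrArg Subtype.val h
    have hR := hxR a b
    have hL := hxL a b
    rw [hx] at hR hL
    have ha : (a : M) = a' := by_contra fun hne => hPR a.2 a'.2 hne (hR.symm.trans (hxR a' b'))
    have hb : (b : M) = b' := by_contra fun hne => hQL b.2 b'.2 hne (hL.symm.trans (hxL a' b'))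
    exact Prod.ext (Subtype.ext ha) (Subtype.ext hb)
  calc P.ncard * Q.ncard = Nat.card (P × Q) := by
        rw [Nat.card_prod, Nat.card_coe_set_eq, Nat.card_coe_set_eq]
    _ ≤ Nat.card (jClass e) := Nat.card_le_card_of_injective F hF
    _ = (jClass e).ncard := Nat.card_coe_set_eq _

theorem four_mul_le_ncard_jClass [Finite M] {Y : Set M} (hYidem : ∀ a ∈ Y, IsIdempotentElem a)
    (hYcomm : Y.Pairwise Commute) (he : IsIdempotentElem e) {u v : M} (hu : JEquiv u e)
    (hv : JEquiv v e) (huv : ¬ JLe e (u * v)) :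
    4 * (((Y ∩ jClass e).ncard + 1) / 2) ≤ (jClass e).ncard := by
  by_cases hm : (Y ∩ jClass e).ncard ≤ 1
  · obtain ⟨c, hc, d, hd, hcd⟩ := exists_not_rEquiv he hu hv huv
    obtain ⟨c', hc', d', hd', hcd'⟩ := exists_not_lEquiv he hu hv huv
    have hne : c ≠ d := by rintro rfl; exact hcd (REquiv.refl c)
    have hne' : c' ≠ d' := by rintro rfl; exact hcd' ⟨LLe.refl c', LLe.refl c'⟩
    have h22 := ncard_mul_ncard_le_ncard_jClass (Set.pair_subset hc hd) (Set.pair_subset hc' hd')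
      (Set.pairwise_pair.mpr fun _ => ⟨hcd, mt REquiv.symm hcd⟩)
      (Set.pairwise_pair.mpr fun _ => ⟨hcd', mt LEquiv.symm hcd'⟩)
    rw [Set.ncard_pair hne, Set.ncard_pair hne'] at h22
    omega
  · have hsq := ncard_mul_ncard_le_ncard_jClass (e := e)
      Set.inter_subset_right Set.inter_subset_right
      (fun a ha b hb hab h => hab (eq_of_rEquiv (hYidem a ha.1) (hYidem b hb.1)
        (hYcomm ha.1 hb.1 hab) h))
      (fun a ha b hb hab h => hab (eq_of_lEquiv (hYidem a ha.1) (hYidem b hb.1)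
        (hYcomm ha.1 hb.1 hab) h))
    set m := (Y ∩ jClass e).ncard
    have : 4 * ((m + 1) / 2) ≤ m * m := by
      rcases (show m = 2 ∨ 3 ≤ m by omega) with h | h
      · rw [h]
      · nlinarith [Nat.div_mul_le_self (m + 1) 2]
    omega

end Green

open Finset in
theorem four_mul_ncard_div_two_add_one_le {α β : Type*} [Finite α] (f : α → β) (Y : Set α)
    {a₀ : α} (h₀ : (Y ∩ f ⁻¹' {f a₀}).ncard ≤ 1)
    (h : ∀ a ∈ Y, f a ≠ f a₀ →
      4 * (((Y ∩ f ⁻¹' {f a}).ncard + 1) / 2) ≤ (f ⁻¹' {f a}).ncard) :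
    4 * (Y.ncard / 2) + 1 ≤ Nat.card α := by
  classical
  have := Fintype.ofFinite α
  have hT : f a₀ ∈ univ.image f := mem_image_of_mem f (mem_univ a₀)
  have hfib (s : Set α) (q : β) : (s ∩ f ⁻¹' {q}).ncard = #{x ∈ s.toFinset | f x = q} := by
    rw [Set.ncard_eq_toFinset_card']
    congr 1
    ext
    simp
  have hY : Y.ncard = ∑ q ∈ univ.image f, (Y ∩ f ⁻¹' {q}).ncard := by
    simp only [hfib]
    rw [Set.ncard_eq_toFinset_card']
    exact card_eq_sum_card_fiberwise fun x _ => mem_image_of_mem f (mem_univ x)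
  have hα : Nat.card α = ∑ q ∈ univ.image f, (f ⁻¹' {q}).ncard := by
    have hfib' (q : β) : (f ⁻¹' {q}).ncard = #{x | f x = q} := by simpa using hfib Set.univ q
    simpa [hfib'] using card_eq_sum_card_image f (univ : Finset α)
  rw [← add_sum_erase _ _ hT] at hY hα
  set T := (univ.image f).erase (f a₀)
  have hclass : ∑ q ∈ T, 4 * (((Y ∩ f ⁻¹' {q}).ncard + 1) / 2) ≤ ∑ q ∈ T, (f ⁻¹' {q}).ncard := by
    refine sum_le_sum fun q hq => ?_
    rcases (Y ∩ f ⁻¹' {q}).eq_empty_or_nonempty with hempty | ⟨a, haY, rfl : f a = q⟩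
    · simp [hempty]
    · exact h a haY (mem_erase.mp hq).1
  have hceil := le_sum_of_subadditive (fun n => (n + 1) / 2) le_rfl (fun m n => by omega) T
    fun q => (Y ∩ f ⁻¹' {q}).ncard
  have hpos : 0 < (f ⁻¹' {f a₀}).ncard := (Set.ncard_pos (Set.toFinite _)).mpr ⟨a₀, rfl⟩
  rw [← mul_sum] at hclass
  omega

open Green

section Semigroup

variable {S : Type u} [Semigroup S] {Y : Set S}

theorem Green.JLe.exists_eq_coe {x : WithOne S} {a : S} (h : JLe x a) : ∃ s : S, x = s := by
  obtain ⟨p, q, rfl⟩ := h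
  refine WithOne.cases_on p ?_ fun p => ?_ <;> refine WithOne.cases_on q ?_ fun q => ?_
  · exact ⟨a, by simp⟩
  · exact ⟨a * q, by simp⟩
  · exact ⟨p * a, by simp⟩
  · exact ⟨p * a * q, by simp⟩

theorem preimage_jClass_coe (a : S) :
    (fun x : S => jClass (x : WithOne S)) ⁻¹' {jClass (a : WithOne S)} =
      ((↑) : S → WithOne S) ⁻¹' jClass (a : WithOne S) := by
  ext x
  exact jClass_eq_jClass_iff

theorem ncard_preimage_coe_jClass (a : S) :
    (((↑) : S → WithOne S) ⁻¹' jClass (a : WithOne S)).ncard = (jClass (a : WithOne S)).ncard :=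
  Set.ncard_preimage_of_injective_subset_range WithOne.coe_injective
    fun _ hx => (hx.1.exists_eq_coe).imp fun _ h => h.symm

theorem ncard_inter_preimage_coe_jClass (Y : Set S) (a : S) :
    (Y ∩ ((↑) : S → WithOne S) ⁻¹' jClass (a : WithOne S)).ncard =
      ((↑) '' Y ∩ jClass (a : WithOne S)).ncard := by
  rw [← Set.image_inter_preimage, Set.ncard_image_of_injective _ WithOne.coe_injective]

theorem IsSubsemilattice.isIdempotentElem_coe (hY : IsSubsemilattice Y) {a : S} (ha : a ∈ Y) :
    IsIdempotentElem (a : WithOne S) := by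
  rw [IsIdempotentElem, ← WithOne.coe_mul, hY.2.1 a ha]

theorem IsSubsemilattice.commute_coe (hY : IsSubsemilattice Y) {a b : S} (ha : a ∈ Y)
    (hb : b ∈ Y) : Commute (a : WithOne S) b := by
  rw [Commute, SemiconjBy, ← WithOne.coe_mul, ← WithOne.coe_mul, hY.2.2 a ha b hb]

theorem IsSubsemilattice.eq_of_jLe [Finite S] (hY : IsSubsemilattice Y) {k : S}
    (hk : ∀ x : S, JLe (k : WithOne S) x) {a b : S} (ha : a ∈ Y) (hb : b ∈ Y)
    (hak : JLe (a : WithOne S) k) (hbk : JLe (b : WithOne S) k) : a = b := by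
  have hab := hY.commute_coe ha hb
  have h₁ := eq_mul_of_jLe_mul (hY.isIdempotentElem_coe ha) (hY.isIdempotentElem_coe hb) hab
    (hak.trans (WithOne.coe_mul a b ▸ hk (a * b)))
  have h₂ := eq_mul_of_jLe_mul (hY.isIdempotentElem_coe hb) (hY.isIdempotentElem_coe ha) hab.symm
    (hbk.trans (WithOne.coe_mul b a ▸ hk (b * a)))
  exact WithOne.coe_injective (h₁.trans (hab.eq.trans h₂.symm))

theorem exists_forall_jLe [Finite S] [Nonempty S] : ∃ k : S, ∀ x : S, JLe (k : WithOne S) x := by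
  obtain ⟨k, -, hk⟩ := Set.Finite.exists_minimalFor (fun a : S => {b : S | JLe (b : WithOne S) a})
    Set.univ Set.finite_univ Set.univ_nonempty
  refine ⟨k, fun x => ?_⟩
  have hkx : JLe (k : WithOne S) ↑(k * x) :=
    hk (Set.mem_univ (k * x)) (fun b hb => hb.trans (WithOne.coe_mul k x ▸ jLe_mul_right _ _))
      (JLe.refl (k : WithOne S))
  exact hkx.trans (WithOne.coe_mul k x ▸ jLe_mul_left _ _)

theorem SemilatticeIndecomposable.eq_univ (hS : SemilatticeIndecomposable S) {F : Set S}
    (hF : ∀ x y, x * y ∈ F ↔ x ∈ F ∧ y ∈ F) {a : S} (ha : a ∈ F) : F = Set.univ := by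
  classical
  let f : S →ₙ* ULift.{u} Bool :=
    { toFun x := ULift.up (decide (x ∈ F))
      map_mul' x y := by ext; simp only [hF, Bool.decide_and]; rfl }
  refine Set.eq_univ_of_forall fun x => ?_
  simpa [f, ha] using hS _ mul_comm (fun b => by ext; exact Bool.and_self b.down) f x a

theorem SemilatticeIndecomposable.exists_jLe_not_jLe_mul (hS : SemilatticeIndecomposable S)
    {e : S} (he : ¬ ∀ x : S, JLe (e : WithOne S) x) :
    ∃ x y : S, JLe (e : WithOne S) x ∧ JLe (e : WithOne S) y ∧ ¬ JLe (e : WithOne S) ↑(x * y) := by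
  by_contra! h
  refine he fun x => ?_
  have hF : {x : S | JLe (e : WithOne S) x} = Set.univ := by
    refine hS.eq_univ (fun x y => ⟨fun hxy => ⟨?_, ?_⟩, fun hxy => h x y hxy.1 hxy.2⟩) (JLe.refl _)
    · exact hxy.trans (WithOne.coe_mul x y ▸ jLe_mul_right _ _)
    · exact hxy.trans (WithOne.coe_mul x y ▸ jLe_mul_left _ _)
  exact Set.eq_univ_iff_forall.mp hF x

theorem SemilatticeIndecomposable.four_mul_le_ncard_jClass [Finite S]
    (hS : SemilatticeIndecomposable S) (hY : IsSubsemilattice Y) {a : S} (ha : a ∈ Y)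
    (hmin : ¬ ∀ x : S, JLe (a : WithOne S) x) :
    4 * ((((↑) '' Y ∩ jClass (a : WithOne S)).ncard + 1) / 2) ≤ (jClass (a : WithOne S)).ncard := by
  obtain ⟨x, y, hx, hy, hxy⟩ := hS.exists_jLe_not_jLe_mul hmin
  obtain ⟨u, v, hu, hv, huv⟩ := exists_jEquiv_not_jLe_mul (hY.isIdempotentElem_coe ha) hx hy
    (WithOne.coe_mul x y ▸ hxy)
  refine Green.four_mul_le_ncard_jClass ?_ ?_ (hY.isIdempotentElem_coe ha) hu hv huv
  · rintro _ ⟨b, hb, rfl⟩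
    exact hY.isIdempotentElem_coe hb
  · rintro _ ⟨b, hb, rfl⟩ _ ⟨c, hc, rfl⟩ -
    exact hY.commute_coe hb hc

end Semigroup

/-- If `S` is a finite semilattice indecomposable semigroup (not necessarily with zero) and `Y` is a
subsemilattice of `S`, then `|Y| ≤ 2⌊(|S|-1)/4⌋ + 1`. -/
theorem stmt_11 {S : Type u} [Semigroup S] [Fintype S]
    (hS : SemilatticeIndecomposable S)
    (Y : Set S) (hY : IsSubsemilattice Y) :
    Y.ncard ≤ 2 * ((Fintype.card S - 1) / 4) + 1 := by
  rcases isEmpty_or_nonempty S with _ | _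
  · simp [Set.eq_empty_of_isEmpty Y]
  obtain ⟨k, hk⟩ := exists_forall_jLe (S := S)
  have key := four_mul_ncard_div_two_add_one_le (fun x : S => jClass (x : WithOne S)) Y (a₀ := k)
    ?kernel ?other
  case kernel =>
    rw [preimage_jClass_coe]
    exact (Set.ncard_le_one (Set.toFinite _)).mpr fun a ha b hb =>
      hY.eq_of_jLe hk ha.1 hb.1 ha.2.1 hb.2.1
  case other =>
    intro a ha hak
    rw [preimage_jClass_coe, ncard_inter_preimage_coe_jClass, ncard_preimage_coe_jClass]
    exact hS.four_mul_le_ncard_jClass hY ha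
      fun h => hak (jClass_eq_jClass_iff.mpr ⟨h k, hk a⟩)
  rw [Nat.card_eq_fintype_card] at key
  omega
end

section
/- If Y is a finite semilattice with n elements, then the semigroup algebra ℂ[Y] is isomorphic as a ℂ-algebra to the direct product of n copies of ℂ; in particular ℂ[Y] is semisimple. -/
/-!
For the natural order `a ≤ b ↔ a * b = a` of a semilattice `Y`, each `y : Y` gives a character
`a ↦ [y ≤ a]` of `Y`. Together they induce an algebra map `K[Y] → (Y → K)` sending `f` to its
zeta transform `y ↦ ∑_{x ≥ y} f x`. This map is injective: at a maximal point `y` of the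
support of `f` the transform equals `f y`. Both sides have dimension `|Y|`, so it is bijective.
-/

theorem Finsupp.eq_zero_of_forall_sum_ge_eq_zero {α M : Type*} [PartialOrder α] [DecidableLE α]
    [AddCommMonoid M] (f : α →₀ M) (h : ∀ y, ∑ x ∈ f.support with y ≤ x, f x = 0) : f = 0 := by
  by_contra hf
  obtain ⟨y, hy, hmax⟩ := f.support.exists_maximal (Finsupp.support_nonempty_iff.2 hf)
  have hsum : ∑ x ∈ f.support with y ≤ x, f x = f y := by
    refine Finset.sum_eq_single_of_mem y (Finset.mem_filter.2 ⟨hy, le_rfl⟩) fun x hx hxy => ?_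
    obtain ⟨hx, hyx⟩ := Finset.mem_filter.1 hx
    exact absurd (le_antisymm (hmax hx hyx) hyx) hxy
  exact Finsupp.mem_support_iff.1 hy (hsum ▸ h y)

section Semilattice

variable {Y : Type*} [CommSemigroup Y]

abbrev semilatticeOrder (hidem : ∀ a : Y, a * a = a) : PartialOrder Y where
  le a b := a * b = a
  le_refl := hidem
  le_trans a b c (hab : a * b = a) (hbc : b * c = b) := show a * c = a by
    rw [← hab, mul_assoc, hbc]
  le_antisymm a b (hab : a * b = a) (hba : b * a = b) := by
    rw [← hab, mul_comm, hba]

theorem mul_mul_eq_left_iff (hidem : ∀ a : Y, a * a = a) {y a b : Y} :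
    y * (a * b) = y ↔ y * a = y ∧ y * b = y := by
  constructor
  · intro h
    constructor
    · rw [← h, mul_assoc, mul_comm a b, mul_assoc, hidem]
    · rw [← h, mul_assoc, mul_assoc, hidem]
  · rintro ⟨ha, hb⟩
    rw [← mul_assoc, ha, hb]

variable (hidem : ∀ a : Y, a * a = a) (K : Type*) [DecidableEq Y]

def semilatticeChar [MulZeroOneClass K] (y : Y) : Y →ₙ* K where
  toFun a := if y * a = y then 1 else 0
  map_mul' a b := by
    by_cases ha : y * a = y <;> by_cases hb : y * b = y <;>
      simp [mul_mul_eq_left_iff hidem, ha, hb]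

namespace MonoidAlgebra

noncomputable def semilatticeZeta [CommSemiring K] : MonoidAlgebra K Y →ₙₐ[K] (Y → K) :=
  liftMagma K (MulHom.pi fun y => semilatticeChar hidem K y)

theorem semilatticeZeta_apply [CommSemiring K] (f : MonoidAlgebra K Y) (y : Y) :
    semilatticeZeta hidem K f y = ∑ x ∈ f.coeff.support with y * x = y, f.coeff x := by
  simp [semilatticeZeta, Finsupp.sum, Finset.sum_filter, semilatticeChar, MulHom.pi]

theorem semilatticeZeta_injective [CommRing K] : Function.Injective (semilatticeZeta hidem K) := by
  let := semilatticeOrder hidem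
  classical
  refine (injective_iff_map_eq_zero _).2 fun f hf => ?_
  have hcoeff : f.coeff = 0 := Finsupp.eq_zero_of_forall_sum_ge_eq_zero f.coeff fun y => by
    have hy := congrFun hf y
    rw [semilatticeZeta_apply, Pi.zero_apply] at hy
    convert hy using 2
    exact Finset.filter_congr fun _ _ => Iff.rfl
  simpa using congrArg ofCoeff hcoeff

theorem semilatticeZeta_bijective [Field K] [Fintype Y] :
    Function.Bijective (semilatticeZeta hidem K) := by
  have hdim : Module.finrank K (MonoidAlgebra K Y) = Module.finrank K (Y → K) := by
    rw [(coeffLinearEquiv K).finrank_eq, Module.finrank_finsupp_self, Module.finrank_pi]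
  have : FiniteDimensional K (MonoidAlgebra K Y) := .equiv (coeffLinearEquiv K).symm
  have hinj := semilatticeZeta_injective hidem K
  exact ⟨hinj, (LinearMap.injective_iff_surjective_of_finrank_eq_finrank
    (f := (semilatticeZeta hidem K : MonoidAlgebra K Y →ₗ[K] (Y → K))) hdim).1 hinj⟩

end MonoidAlgebra

end Semilattice

/-- If `Y` is a finite semilattice (a finite commutative idempotent semigroup) with `n`
elements, then the semigroup algebra `ℂ[Y]` is isomorphic as a ℂ-algebra (an additive,
multiplicative and ℂ-linear isomorphism) to the product of `n` copies of `ℂ`; in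
particular `ℂ[Y]` is semisimple. -/
theorem stmt_19 {Y : Type} [Semigroup Y] [Fintype Y]
    (hcomm : ∀ a b : Y, a * b = b * a) (hidem : ∀ a : Y, a * a = a)
    {n : ℕ} (hn : Fintype.card Y = n) :
    ∃ e : MonoidAlgebra ℂ Y ≃+* (Fin n → ℂ),
      ∀ (c : ℂ) (x : MonoidAlgebra ℂ Y), e (c • x) = c • e x := by
  classical
  let : CommSemigroup Y := { mul_comm := hcomm }
  let ζ := RingEquiv.ofBijective (MonoidAlgebra.semilatticeZeta hidem ℂ)
    (MonoidAlgebra.semilatticeZeta_bijective hidem ℂ)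
  let σ := AlgEquiv.piCongrLeft' ℂ (fun _ => ℂ) (Fintype.equivFinOfCardEq hn)
  refine ⟨ζ.trans σ.toRingEquiv, fun c x => ?_⟩
  simp [ζ, map_smul]
end
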